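/- Completeness of LTL-SN: for every LTL-SN formula φ over a fixed finite nonempty agent set 𝒜 and threshold θ ∈ [0,1], if ⊨ φ (i.e., M, i ⊨ φ for every LTL-SN model M with agent set 𝒜 and threshold θ and every position i) then ⊢ φ. -/
import Mathlib


open scoped Classical

/-- An LTL-SN model: a finite set of agents `A`, an irreflexive, serial and
symmetric neighborhood function `N`, a threshold `θ ∈ [0,1]` and an initial
behavior set `I`. -/
structure SNModel (A : Type*) [Fintype A] [DecidableEq A] where
  N : A → Finset A
  θ : ℝ
  I : Finset A
  irrefl : ∀ a, a ∉ N a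
  serial : ∀ a, (N a).Nonempty
  symm : ∀ a c, c ∈ N a ↔ a ∈ N c
  θ_nonneg : 0 ≤ θ
  θ_le_one : θ ≤ 1

variable {A : Type*} [Fintype A] [DecidableEq A]

/-- The update `B ∪ {a ∈ 𝒜 : |N(a) ∩ B| / |N(a)| > θ}`. -/
noncomputable def SNModel.upd (M : SNModel A) (B : Finset A) : Finset A :=
  B ∪ Finset.univ.filter (fun a => M.θ < ((M.N a ∩ B).card : ℝ) / ((M.N a).card : ℝ))

/-- The relation `B ≤ B'` of the model. -/
def SNModel.rel (M : SNModel A) (B B' : Finset A) : Prop := B' = M.upd B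

/-- The (unique) path of the model: `b 0 = I` and `b i ≤ b (i+1)`. -/
noncomputable def SNModel.path (M : SNModel A) : ℕ → Finset A
  | 0 => M.I
  | i + 1 => M.upd (M.path i)

/-- Formulas of LTL-SN: `⊤ | N_{ab} | β_a | ¬φ | φ∧φ | Xφ | φUφ`. -/
inductive Formula (A : Type*) : Type _
  | top : Formula A
  | nbr : A → A → Formula A
  | beta : A → Formula A
  | neg : Formula A → Formula A
  | and : Formula A → Formula A → Formula A
  | next : Formula A → Formula A
  | untl : Formula A → Formula A → Formula A
deriving DecidableEq

/-- Disjunction abbreviation `φ ∨ ψ := ¬(¬φ ∧ ¬ψ)`. -/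
def Formula.orF (φ ψ : Formula A) : Formula A := .neg (.and (.neg φ) (.neg ψ))

/-- Implication abbreviation `φ → ψ := ¬(φ ∧ ¬ψ)`. -/
def Formula.impF (φ ψ : Formula A) : Formula A := .neg (.and φ (.neg ψ))

/-- Biimplication abbreviation. -/
def Formula.iffF (φ ψ : Formula A) : Formula A := .and (φ.impF ψ) (ψ.impF φ)

/-- `F φ := ⊤ U φ`. -/
def Formula.ev (φ : Formula A) : Formula A := .untl .top φ

/-- `G φ := ¬ F ¬ φ`. -/
def Formula.glob (φ : Formula A) : Formula A := .neg (Formula.ev (.neg φ))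

/-- Finite disjunction of a list of formulas. -/
def bigOr : List (Formula A) → Formula A
  | [] => .neg .top
  | φ :: l => φ.orF (bigOr l)

/-- Finite conjunction of a list of formulas. -/
def bigAnd : List (Formula A) → Formula A
  | [] => .top
  | φ :: l => .and φ (bigAnd l)

/-- Satisfaction at a position of the unique path of the model. -/
def Sat (M : SNModel A) : ℕ → Formula A → Prop
  | _, Formula.top => True
  | _, Formula.nbr a c => c ∈ M.N a
  | i, Formula.beta a => a ∈ M.path i
  | i, Formula.neg φ => ¬ Sat M i φ
  | i, Formula.and φ ψ => Sat M i φ ∧ Sat M i ψ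
  | i, Formula.next φ => Sat M (i + 1) φ
  | i, Formula.untl φ ψ => ∃ n : ℕ, Sat M (i + n) ψ ∧ ∀ j < n, Sat M (i + j) φ

/-- The until-expansion steps: `u⁰(φUψ) = ψ`, `uⁿ⁺¹(φUψ) = φ ∧ X uⁿ(φUψ)`. -/
def uStep (φ ψ : Formula A) : ℕ → Formula A
  | 0 => ψ
  | n + 1 => .and φ (.next (uStep φ ψ n))

/-- The until expansion `EXP_U(φUψ) = ⋁_{0 ≤ n ≤ |𝒜|} uⁿ(φUψ)`. -/
def expU (φ ψ : Formula A) : Formula A :=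
  bigOr (((List.range (Fintype.card A + 1))).map (uStep φ ψ))

/-- The majority abbreviation
`β_{N(a)>θ} := ⋁_{G ⊆ 𝒩 ⊆ 𝒜, |G|/|𝒩| > θ} (⋀_{c∈𝒩} N_{ac} ∧ ⋀_{c∉𝒩} ¬N_{ac} ∧ ⋀_{c∈G} β_c)`. -/
noncomputable def majorityF (θ : ℝ) (a : A) : Formula A :=
  bigOr ((((Finset.univ : Finset (Finset A × Finset A)).filter
      (fun p => p.1 ⊆ p.2 ∧ θ < (p.1.card : ℝ) / (p.2.card : ℝ))).toList).map
    (fun p =>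
      Formula.and (bigAnd (p.2.toList.map (fun c => Formula.nbr a c)))
        (Formula.and
          (bigAnd (((Finset.univ : Finset A) \ p.2).toList.map
            (fun c => Formula.neg (Formula.nbr a c))))
          (bigAnd (p.1.toList.map (fun c => Formula.beta c))))))

/-- Propositional evaluation: `⊤`, `¬`, `∧` are interpreted, all other formulas
are treated as atoms evaluated by the valuation `v`. -/
def evalProp (v : Formula A → Prop) : Formula A → Prop
  | .top => True
  | .neg φ => ¬ evalProp v φ
  | .and φ ψ => evalProp v φ ∧ evalProp v ψ
  | φ => v φ

/-- A (substitution instance of a) classical propositional tautology. -/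
def Tautology (φ : Formula A) : Prop := ∀ v : Formula A → Prop, evalProp v φ

/-- The LTL-SN proof system. -/
inductive Proof (θ : ℝ) : Formula A → Prop
  | taut {φ : Formula A} : Tautology φ → Proof θ φ
  | netIrrefl (a : A) : Proof θ (.neg (.nbr a a))
  | netSymm (a c : A) : Proof θ ((Formula.nbr a c).iffF (.nbr c a))
  | netSerial (a : A) :
      Proof θ (bigOr (((Finset.univ : Finset A)).toList.map (fun c => Formula.nbr a c)))
  | redN (a c : A) : Proof θ ((Formula.next (.nbr a c)).iffF (.nbr a c))
  | redB (a : A) :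
      Proof θ ((Formula.next (.beta a)).iffF ((Formula.beta a).orF (majorityF θ a)))
  | redU (φ ψ : Formula A) : Proof θ ((Formula.untl φ ψ).iffF (expU φ ψ))
  | a1 (φ ψ : Formula A) :
      Proof θ ((Formula.glob (φ.impF ψ)).impF ((Formula.glob φ).impF (Formula.glob ψ)))
  | a2 (φ : Formula A) : Proof θ ((Formula.neg (.next φ)).iffF (.next (.neg φ)))
  | a3 (φ ψ : Formula A) :
      Proof θ ((Formula.next (φ.impF ψ)).impF ((Formula.next φ).impF (.next ψ)))
  | a4 (φ : Formula A) :
      Proof θ ((Formula.glob (φ.impF (.next φ))).impF (φ.impF (Formula.glob φ)))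
  | a5 (φ ψ : Formula A) :
      Proof θ ((Formula.untl φ ψ).iffF (ψ.orF (.and φ (.next (.untl φ ψ)))))
  | a6 (φ ψ : Formula A) : Proof θ ((Formula.untl φ ψ).impF (Formula.ev ψ))
  | a7 (φ ψ₁ ψ₂ : Formula A) :
      Proof θ ((Formula.untl φ (ψ₁.orF ψ₂)).iffF ((Formula.untl φ ψ₁).orF (.untl φ ψ₂)))
  | a8 (φ ψ : Formula A) :
      Proof θ ((Formula.next (.and φ ψ)).iffF (.and (.next φ) (.next ψ)))
  | mp {φ ψ : Formula A} : Proof θ (φ.impF ψ) → Proof θ φ → Proof θ ψ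
  | necG {φ : Formula A} : Proof θ φ → Proof θ (Formula.glob φ)
  | necX {φ : Formula A} : Proof θ φ → Proof θ (.next φ)

/-- Substitution `[φ/ψ]χ` of `φ` for occurrences of the subformula `ψ` in `χ`. -/
def subst (φ ψ : Formula A) : Formula A → Formula A
  | .neg χ₁ => if Formula.neg χ₁ = ψ then φ else .neg (subst φ ψ χ₁)
  | .and χ₁ χ₂ => if Formula.and χ₁ χ₂ = ψ then φ else .and (subst φ ψ χ₁) (subst φ ψ χ₂)
  | .next χ₁ => if Formula.next χ₁ = ψ then φ else .next (subst φ ψ χ₁)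
  | .untl χ₁ χ₂ => if Formula.untl χ₁ χ₂ = ψ then φ else .untl (subst φ ψ χ₁) (subst φ ψ χ₂)
  | χ => if χ = ψ then φ else χ

/-- The until translation `t_u`; on until formulas
`t_u(φUψ) = t_u(EXP_U(φUψ)) = EXP_U(t_u(φ) U t_u(ψ))` (since `t_u` commutes with
`¬`, `∧` and `X`). -/
def tu : Formula A → Formula A
  | .top => .top
  | .nbr a c => .nbr a c
  | .beta a => .beta a
  | .neg φ => .neg (tu φ)
  | .and φ ψ => .and (tu φ) (tu ψ)
  | .next φ => .next (tu φ)
  | .untl φ ψ => expU (tu φ) (tu ψ)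

/-- A formula contains no occurrence of the until operator. -/
def untilFree : Formula A → Prop
  | .top => True
  | .nbr _ _ => True
  | .beta _ => True
  | .neg φ => untilFree φ
  | .and φ ψ => untilFree φ ∧ untilFree ψ
  | .next φ => untilFree φ
  | .untl _ _ => False

/-- A formula is propositional: no occurrence of `X` nor of `U`. -/
def propositional : Formula A → Prop
  | .top => True
  | .nbr _ _ => True
  | .beta _ => True
  | .neg φ => propositional φ
  | .and φ ψ => propositional φ ∧ propositional ψ
  | .next _ => False
  | .untl _ _ => False

/-- The cost measure `c` (on until-free formulas). -/
def cost : Formula A → ℕ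
  | .top => 1
  | .nbr _ _ => 1
  | .beta _ => 1
  | .neg φ => 1 + cost φ
  | .and φ ψ => 1 + max (cost φ) (cost ψ)
  | .next (.beta _) => 4 + 2 * Fintype.card A ^ 2
  | .next φ => 2 * cost φ
  | .untl φ ψ => 1 + max (cost φ) (cost ψ)

/-- The subformula relation. -/
inductive Subf : Formula A → Formula A → Prop
  | refl (φ : Formula A) : Subf φ φ
  | neg {ψ φ : Formula A} : Subf ψ φ → Subf ψ (.neg φ)
  | andL {ψ φ₁ φ₂ : Formula A} : Subf ψ φ₁ → Subf ψ (.and φ₁ φ₂)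
  | andR {ψ φ₁ φ₂ : Formula A} : Subf ψ φ₂ → Subf ψ (.and φ₁ φ₂)
  | next {ψ φ : Formula A} : Subf ψ φ → Subf ψ (.next φ)
  | untlL {ψ φ₁ φ₂ : Formula A} : Subf ψ φ₁ → Subf ψ (.untl φ₁ φ₂)
  | untlR {ψ φ₁ φ₂ : Formula A} : Subf ψ φ₂ → Subf ψ (.untl φ₁ φ₂)

/-- `pushX θ φ` computes `t(Xφ)` for a propositional (`X`- and `U`-free) formula
`φ`: it replaces each `β_a` by `β_a ∨ β_{N(a)>θ}` and keeps `N_{ac}` unchanged,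
following the reduction equations `t(XN_{ac}) = N_{ac}`, `t(Xβ_a) = t(β_a ∨ β_{N(a)>θ})`,
`t(X(φ∧ψ)) = t(Xφ ∧ Xψ)`, `t(X¬φ) = t(¬Xφ)`. -/
noncomputable def pushX (θ : ℝ) : Formula A → Formula A
  | .top => .top
  | .nbr a c => .nbr a c
  | .beta a => (Formula.beta a).orF (majorityF θ a)
  | .neg φ => .neg (pushX θ φ)
  | .and φ ψ => .and (pushX θ φ) (pushX θ ψ)
  | .next φ => .next (pushX θ φ)
  | .untl φ ψ => .untl (pushX θ φ) (pushX θ ψ)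

/-- The translation `t` of until-free formulas into propositional formulas, given
by `t(N_{ac}) = N_{ac}`, `t(β_a) = β_a`, `t(φ∧ψ) = t(φ)∧t(ψ)`, `t(¬φ) = ¬t(φ)`,
`t(XN_{ac}) = N_{ac}`, `t(Xβ_a) = t(β_a ∨ β_{N(a)>θ})`, `t(X(φ∧ψ)) = t(Xφ ∧ Xψ)`,
`t(X¬φ) = t(¬Xφ)` and `t(XXφ) = t(X t(Xφ))`; all `X` cases are computed by
pushing `X` through the already translated (hence propositional) body. -/
noncomputable def tr (θ : ℝ) : Formula A → Formula A
  | .top => .top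
  | .nbr a c => .nbr a c
  | .beta a => .beta a
  | .neg φ => .neg (tr θ φ)
  | .and φ ψ => .and (tr θ φ) (tr θ ψ)
  | .next φ => pushX θ (tr θ φ)
  | .untl φ ψ => .untl (tr θ φ) (tr θ ψ)
set_option linter.unusedSectionVars false
section Aux
variable {A : Type*} [Fintype A] [DecidableEq A]

@[simp] lemma evalProp_top (v : Formula A → Prop) : evalProp v (.top) ↔ True := Iff.rfl
@[simp] lemma evalProp_neg (v : Formula A → Prop) (φ : Formula A) :
    evalProp v (.neg φ) ↔ ¬ evalProp v φ := Iff.rfl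
@[simp] lemma evalProp_and (v : Formula A → Prop) (φ ψ : Formula A) :
    evalProp v (.and φ ψ) ↔ evalProp v φ ∧ evalProp v ψ := Iff.rfl
@[simp] lemma evalProp_nbr (v : Formula A → Prop) (a c : A) :
    evalProp v (.nbr a c) ↔ v (.nbr a c) := Iff.rfl
@[simp] lemma evalProp_beta (v : Formula A → Prop) (a : A) :
    evalProp v (.beta a) ↔ v (.beta a) := Iff.rfl
@[simp] lemma evalProp_next (v : Formula A → Prop) (φ : Formula A) :
    evalProp v (.next φ) ↔ v (.next φ) := Iff.rfl
@[simp] lemma evalProp_untl (v : Formula A → Prop) (φ ψ : Formula A) :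
    evalProp v (.untl φ ψ) ↔ v (.untl φ ψ) := Iff.rfl
@[simp] lemma evalProp_orF (v : Formula A → Prop) (φ ψ : Formula A) :
    evalProp v (φ.orF ψ) ↔ evalProp v φ ∨ evalProp v ψ := by
  simp only [Formula.orF, evalProp_neg, evalProp_and]; tauto
@[simp] lemma evalProp_impF (v : Formula A → Prop) (φ ψ : Formula A) :
    evalProp v (φ.impF ψ) ↔ (evalProp v φ → evalProp v ψ) := by
  simp only [Formula.impF, evalProp_neg, evalProp_and]; tauto
@[simp] lemma evalProp_iffF (v : Formula A → Prop) (φ ψ : Formula A) :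
    evalProp v (φ.iffF ψ) ↔ (evalProp v φ ↔ evalProp v ψ) := by
  simp only [Formula.iffF, evalProp_impF, evalProp_and]; tauto

lemma evalProp_bigAnd (v : Formula A → Prop) (l : List (Formula A)) :
    evalProp v (bigAnd l) ↔ ∀ ψ ∈ l, evalProp v ψ := by
  induction l with
  | nil => simp [bigAnd]
  | cons a l ih => simp [bigAnd, ih]

lemma evalProp_bigOr (v : Formula A → Prop) (l : List (Formula A)) :
    evalProp v (bigOr l) ↔ ∃ ψ ∈ l, evalProp v ψ := by
  induction l with
  | nil => simp [bigOr]
  | cons a l ih => simp [bigOr, ih]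

variable {θ : ℝ}

lemma Proof.weak {φ ψ : Formula A} (h : Proof θ φ) : Proof θ (ψ.impF φ) :=
  Proof.mp (Proof.taut (by intro v; simp; tauto)) h

lemma Proof.iffIntro {φ ψ : Formula A} (h1 : Proof θ (φ.impF ψ)) (h2 : Proof θ (ψ.impF φ)) :
    Proof θ (φ.iffF ψ) :=
  Proof.mp (Proof.mp (Proof.taut (φ := (φ.impF ψ).impF ((ψ.impF φ).impF (φ.iffF ψ)))
    (by intro v; simp; tauto)) h1) h2

lemma Proof.iff1 {φ ψ : Formula A} (h : Proof θ (φ.iffF ψ)) : Proof θ (φ.impF ψ) :=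
  Proof.mp (Proof.taut (φ := (φ.iffF ψ).impF (φ.impF ψ)) (by intro v; simp; tauto)) h

lemma Proof.iff2 {φ ψ : Formula A} (h : Proof θ (φ.iffF ψ)) : Proof θ (ψ.impF φ) :=
  Proof.mp (Proof.taut (φ := (φ.iffF ψ).impF (ψ.impF φ)) (by intro v; simp; tauto)) h

lemma Proof.iffRefl (φ : Formula A) : Proof θ (φ.iffF φ) :=
  Proof.taut (by intro v; simp)

lemma Proof.iffSymm {φ ψ : Formula A} (h : Proof θ (φ.iffF ψ)) : Proof θ (ψ.iffF φ) :=
  Proof.iffIntro (Proof.iff2 h) (Proof.iff1 h)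

lemma Proof.iffTrans {φ ψ χ : Formula A} (h1 : Proof θ (φ.iffF ψ)) (h2 : Proof θ (ψ.iffF χ)) :
    Proof θ (φ.iffF χ) :=
  Proof.mp (Proof.mp (Proof.taut
    (φ := (φ.iffF ψ).impF ((ψ.iffF χ).impF (φ.iffF χ))) (by intro v; simp; tauto)) h1) h2

lemma Proof.negCong {φ ψ : Formula A} (h : Proof θ (φ.iffF ψ)) :
    Proof θ ((Formula.neg φ).iffF (.neg ψ)) :=
  Proof.mp (Proof.taut (φ := (φ.iffF ψ).impF ((Formula.neg φ).iffF (.neg ψ)))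
    (by intro v; simp; tauto)) h

lemma Proof.andCong {φ φ' ψ ψ' : Formula A} (h1 : Proof θ (φ.iffF φ')) (h2 : Proof θ (ψ.iffF ψ')) :
    Proof θ ((Formula.and φ ψ).iffF (.and φ' ψ')) :=
  Proof.mp (Proof.mp (Proof.taut
    (φ := (φ.iffF φ').impF ((ψ.iffF ψ').impF ((Formula.and φ ψ).iffF (.and φ' ψ'))))
    (by intro v; simp; tauto)) h1) h2

lemma Proof.orCong {φ φ' ψ ψ' : Formula A} (h1 : Proof θ (φ.iffF φ')) (h2 : Proof θ (ψ.iffF ψ')) :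
    Proof θ ((φ.orF ψ).iffF (φ'.orF ψ')) :=
  Proof.mp (Proof.mp (Proof.taut
    (φ := (φ.iffF φ').impF ((ψ.iffF ψ').impF ((φ.orF ψ).iffF (φ'.orF ψ'))))
    (by intro v; simp; tauto)) h1) h2

lemma Proof.nextCong {φ ψ : Formula A} (h : Proof θ (φ.iffF ψ)) :
    Proof θ ((Formula.next φ).iffF (.next ψ)) := by
  have d1 : Proof θ ((Formula.next φ).impF (.next ψ)) :=
    Proof.mp (Proof.a3 φ ψ) (Proof.necX (Proof.iff1 h))
  have d2 : Proof θ ((Formula.next ψ).impF (.next φ)) :=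
    Proof.mp (Proof.a3 ψ φ) (Proof.necX (Proof.iff2 h))
  exact Proof.iffIntro d1 d2

end Aux

section Aux2
set_option linter.unusedSectionVars false
variable {A : Type*} [Fintype A] [DecidableEq A] {θ : ℝ}

lemma Proof.bigOrMapCong {α : Type*} (l : List α) (f g : α → Formula A)
    (h : ∀ x ∈ l, Proof θ ((f x).iffF (g x))) :
    Proof θ ((bigOr (l.map f)).iffF (bigOr (l.map g))) := by
  induction l with
  | nil => exact Proof.iffRefl _
  | cons a l ih =>
      exact Proof.orCong (h a (by simp)) (ih fun x hx => h x (by simp [hx]))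

lemma Proof.uStepCong {φ φ' ψ ψ' : Formula A} (h1 : Proof θ (φ.iffF φ'))
    (h2 : Proof θ (ψ.iffF ψ')) (n : ℕ) :
    Proof θ ((uStep φ ψ n).iffF (uStep φ' ψ' n)) := by
  induction n with
  | zero => exact h2
  | succ n ih => exact Proof.andCong h1 (Proof.nextCong ih)

lemma Proof.expUCong {φ φ' ψ ψ' : Formula A} (h1 : Proof θ (φ.iffF φ'))
    (h2 : Proof θ (ψ.iffF ψ')) :
    Proof θ ((expU φ ψ).iffF (expU φ' ψ')) :=
  Proof.bigOrMapCong _ _ _ fun n _ => Proof.uStepCong h1 h2 n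

lemma equivTu (φ : Formula A) : Proof θ (φ.iffF (tu φ)) := by
  induction φ with
  | top => exact Proof.iffRefl _
  | nbr a c => exact Proof.iffRefl _
  | beta a => exact Proof.iffRefl _
  | neg φ ih => exact Proof.negCong ih
  | and φ ψ ih1 ih2 => exact Proof.andCong ih1 ih2
  | next φ ih => exact Proof.nextCong ih
  | untl φ ψ ih1 ih2 => exact Proof.iffTrans (Proof.redU φ ψ) (Proof.expUCong ih1 ih2)

lemma untilFree_bigOr {l : List (Formula A)} (h : ∀ ψ ∈ l, untilFree ψ) :
    untilFree (bigOr l) := by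
  induction l with
  | nil => trivial
  | cons a l ih =>
      simp only [bigOr, Formula.orF, untilFree]
      exact ⟨h a (by simp), ih fun x hx => h x (by simp [hx])⟩

lemma untilFree_uStep {φ ψ : Formula A} (h1 : untilFree φ) (h2 : untilFree ψ) (n : ℕ) :
    untilFree (uStep φ ψ n) := by
  induction n with
  | zero => exact h2
  | succ n ih => exact ⟨h1, ih⟩

lemma untilFree_tu (φ : Formula A) : untilFree (tu φ) := by
  induction φ with
  | top => trivial
  | nbr a c => trivial
  | beta a => trivial
  | neg φ ih => exact ih
  | and φ ψ ih1 ih2 => exact ⟨ih1, ih2⟩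
  | next φ ih => exact ih
  | untl φ ψ ih1 ih2 =>
      exact untilFree_bigOr (by
        intro χ hχ
        simp only [tu, List.mem_map] at hχ ⊢
        obtain ⟨n, _, rfl⟩ := hχ
        exact untilFree_uStep ih1 ih2 n)

lemma propositional_bigOr {l : List (Formula A)} (h : ∀ ψ ∈ l, propositional ψ) :
    propositional (bigOr l) := by
  induction l with
  | nil => trivial
  | cons a l ih =>
      simp only [bigOr, Formula.orF, propositional]
      exact ⟨h a (by simp), ih fun x hx => h x (by simp [hx])⟩

lemma propositional_bigAnd {l : List (Formula A)} (h : ∀ ψ ∈ l, propositional ψ) :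
    propositional (bigAnd l) := by
  induction l with
  | nil => trivial
  | cons a l ih => exact ⟨h a (by simp), ih fun x hx => h x (by simp [hx])⟩

lemma propositional_majorityF (a : A) : propositional (majorityF θ a) := by
  apply propositional_bigOr
  intro χ hχ
  simp only [majorityF, List.mem_map] at hχ
  obtain ⟨p, _, rfl⟩ := hχ
  refine ⟨propositional_bigAnd ?_, propositional_bigAnd ?_, propositional_bigAnd ?_⟩ <;>
    · intro x hx; simp only [List.mem_map] at hx; obtain ⟨c, _, rfl⟩ := hx; trivial

lemma propositional_pushX {φ : Formula A} (h : propositional φ) :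
    propositional (pushX θ φ) := by
  induction φ with
  | top => trivial
  | nbr a c => trivial
  | beta a =>
      simp only [pushX, Formula.orF, propositional]
      exact ⟨trivial, propositional_majorityF a⟩
  | neg φ ih => exact ih h
  | and φ ψ ih1 ih2 => exact ⟨ih1 h.1, ih2 h.2⟩
  | next φ ih => exact (h : False).elim
  | untl φ ψ ih1 ih2 => exact (h : False).elim

lemma propositional_tr {φ : Formula A} (h : untilFree φ) : propositional (tr θ φ) := by
  induction φ with
  | top => trivial
  | nbr a c => trivial
  | beta a => trivial
  | neg φ ih => exact ih h
  | and φ ψ ih1 ih2 => exact ⟨ih1 h.1, ih2 h.2⟩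
  | next φ ih => exact propositional_pushX (ih h)
  | untl φ ψ ih1 ih2 => exact (h : False).elim

lemma xTopIff : Proof (A := A) θ ((Formula.next .top).iffF .top) :=
  Proof.iffIntro (Proof.taut (by intro v; simp))
    (Proof.weak (Proof.necX (Proof.taut (by intro v; simp))))

lemma xPushX {ψ : Formula A} (h : propositional ψ) :
    Proof θ ((Formula.next ψ).iffF (pushX θ ψ)) := by
  induction ψ with
  | top => exact xTopIff
  | nbr a c => exact Proof.redN a c
  | beta a => exact Proof.redB a
  | neg φ ih =>
      exact Proof.iffTrans (Proof.iffSymm (Proof.a2 φ)) (Proof.negCong (ih h))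
  | and φ ψ ih1 ih2 =>
      exact Proof.iffTrans (Proof.a8 φ ψ) (Proof.andCong (ih1 h.1) (ih2 h.2))
  | next φ ih => exact (h : False).elim
  | untl φ ψ ih1 ih2 => exact (h : False).elim

lemma equivTr {φ : Formula A} (h : untilFree φ) : Proof θ (φ.iffF (tr θ φ)) := by
  induction φ with
  | top => exact Proof.iffRefl _
  | nbr a c => exact Proof.iffRefl _
  | beta a => exact Proof.iffRefl _
  | neg φ ih => exact Proof.negCong (ih h)
  | and φ ψ ih1 ih2 => exact Proof.andCong (ih1 h.1) (ih2 h.2)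
  | next φ ih =>
      exact Proof.iffTrans (Proof.nextCong (ih h)) (xPushX (propositional_tr h))
  | untl φ ψ ih1 ih2 => exact (h : False).elim

end Aux2

section Aux3
set_option linter.unusedSectionVars false
variable {A : Type*} [Fintype A] [DecidableEq A] {θ : ℝ} {M : SNModel A}

@[simp] lemma Sat_top (i : ℕ) : Sat M i (.top) ↔ True := Iff.rfl
@[simp] lemma Sat_nbr (i : ℕ) (a c : A) : Sat M i (.nbr a c) ↔ c ∈ M.N a := Iff.rfl
@[simp] lemma Sat_beta (i : ℕ) (a : A) : Sat M i (.beta a) ↔ a ∈ M.path i := Iff.rfl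
@[simp] lemma Sat_neg (i : ℕ) (φ : Formula A) : Sat M i (.neg φ) ↔ ¬ Sat M i φ := Iff.rfl
@[simp] lemma Sat_and (i : ℕ) (φ ψ : Formula A) :
    Sat M i (.and φ ψ) ↔ Sat M i φ ∧ Sat M i ψ := Iff.rfl
@[simp] lemma Sat_next (i : ℕ) (φ : Formula A) : Sat M i (.next φ) ↔ Sat M (i + 1) φ := Iff.rfl
@[simp] lemma Sat_untl (i : ℕ) (φ ψ : Formula A) :
    Sat M i (.untl φ ψ) ↔ ∃ n : ℕ, Sat M (i + n) ψ ∧ ∀ j < n, Sat M (i + j) φ := Iff.rfl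
@[simp] lemma Sat_orF (i : ℕ) (φ ψ : Formula A) :
    Sat M i (φ.orF ψ) ↔ Sat M i φ ∨ Sat M i ψ := by
  simp only [Formula.orF, Sat_neg, Sat_and]; tauto
@[simp] lemma Sat_impF (i : ℕ) (φ ψ : Formula A) :
    Sat M i (φ.impF ψ) ↔ (Sat M i φ → Sat M i ψ) := by
  simp only [Formula.impF, Sat_neg, Sat_and]; tauto
@[simp] lemma Sat_iffF (i : ℕ) (φ ψ : Formula A) :
    Sat M i (φ.iffF ψ) ↔ (Sat M i φ ↔ Sat M i ψ) := by
  simp only [Formula.iffF, Sat_impF, Sat_and]; tauto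

lemma Sat_bigOr (i : ℕ) (l : List (Formula A)) :
    Sat M i (bigOr l) ↔ ∃ ψ ∈ l, Sat M i ψ := by
  induction l with
  | nil => simp [bigOr]
  | cons a l ih => simp [bigOr, ih]

lemma Sat_bigAnd (i : ℕ) (l : List (Formula A)) :
    Sat M i (bigAnd l) ↔ ∀ ψ ∈ l, Sat M i ψ := by
  induction l with
  | nil => simp [bigAnd]
  | cons a l ih => simp [bigAnd, ih]

lemma path_subset_succ (i : ℕ) : M.path i ⊆ M.path (i + 1) := by
  show M.path i ⊆ M.upd (M.path i)
  exact Finset.subset_union_left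

lemma path_stab_succ {i : ℕ} (h : M.path i = M.path (i + 1)) (m : ℕ) :
    M.path (i + m) = M.path i := by
  induction m with
  | zero => rfl
  | succ m ih =>
      have : M.path (i + m + 1) = M.upd (M.path (i + m)) := rfl
      rw [← Nat.add_assoc, this, ih]
      exact h.symm

lemma path_card_ge {i : ℕ} (h : ∀ k < Fintype.card A + 1, M.path (i + k) ≠ M.path (i + k + 1)) :
    ∀ k ≤ Fintype.card A + 1, k ≤ (M.path (i + k)).card := by
  intro k hk
  induction k with
  | zero => exact Nat.zero_le _
  | succ k ih =>
      have h1 : M.path (i + k) ⊂ M.path (i + k + 1) :=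
        (Finset.ssubset_iff_subset_ne).2 ⟨path_subset_succ _, h k (Nat.lt_of_succ_le hk)⟩
      have hc := Finset.card_lt_card h1
      have hi := ih (Nat.le_of_succ_le hk)
      rw [← Nat.add_assoc]
      omega

lemma path_stab (i : ℕ) (m : ℕ) :
    M.path (i + Fintype.card A + m) = M.path (i + Fintype.card A) := by
  have hex : ∃ k ≤ Fintype.card A, M.path (i + k) = M.path (i + k + 1) := by
    by_contra hc
    push_neg at hc
    have h := path_card_ge (M := M) (i := i) (fun k hk => by
      rcases Nat.lt_or_ge k (Fintype.card A + 1) with h' | h'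
      · rcases Nat.lt_or_ge k (Fintype.card A) with h'' | h''
        · exact hc k (Nat.le_of_lt h'')
        · have : k = Fintype.card A := by omega
          exact this ▸ hc k (le_of_eq this)
      · omega)
    have := h (Fintype.card A + 1) le_rfl
    have hle := Finset.card_le_univ (M.path (i + (Fintype.card A + 1)))
    omega
  obtain ⟨k, hk, heq⟩ := hex
  have hstab : ∀ m', M.path (i + k + m') = M.path (i + k) := path_stab_succ heq
  have h1 : M.path (i + Fintype.card A + m) = M.path (i + k) := by
    have : i + Fintype.card A + m = i + k + (Fintype.card A - k + m) := by omega
    rw [this]; exact hstab _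
  have h2 : M.path (i + Fintype.card A) = M.path (i + k) := by
    have : i + Fintype.card A = i + k + (Fintype.card A - k) := by omega
    rw [this]; exact hstab _
  rw [h1, h2]

lemma Sat_of_pathEq (χ : Formula A) :
    ∀ i j : ℕ, (∀ m, M.path (i + m) = M.path (j + m)) → (Sat M i χ ↔ Sat M j χ) := by
  induction χ with
  | top => intro i j h; rfl
  | nbr a c => intro i j h; rfl
  | beta a => intro i j h; have := h 0; simp only [Nat.add_zero] at this; simp [this]
  | neg φ ih => intro i j h; simp [ih i j h]
  | and φ ψ ih1 ih2 => intro i j h; simp [ih1 i j h, ih2 i j h]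
  | next φ ih =>
      intro i j h
      exact ih (i + 1) (j + 1) (fun m => by
        rw [Nat.add_assoc, Nat.add_assoc]; exact h (1 + m))
  | untl φ ψ ih1 ih2 =>
      intro i j h
      simp only [Sat_untl]
      constructor
      · rintro ⟨n, hn, hj⟩
        exact ⟨n, (ih2 (i + n) (j + n) (fun m => by rw [Nat.add_assoc, Nat.add_assoc]; exact h (n + m))).1 hn,
          fun k hk => (ih1 (i + k) (j + k) (fun m => by rw [Nat.add_assoc, Nat.add_assoc]; exact h (k + m))).1 (hj k hk)⟩
      · rintro ⟨n, hn, hj⟩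
        exact ⟨n, (ih2 (i + n) (j + n) (fun m => by rw [Nat.add_assoc, Nat.add_assoc]; exact h (n + m))).2 hn,
          fun k hk => (ih1 (i + k) (j + k) (fun m => by rw [Nat.add_assoc, Nat.add_assoc]; exact h (k + m))).2 (hj k hk)⟩

end Aux3

section Aux4
set_option linter.unusedSectionVars false
variable {A : Type*} [Fintype A] [DecidableEq A] {θ : ℝ} {M : SNModel A}

lemma Sat_of_pathEq' {i j : ℕ} (h : M.path i = M.path j) (χ : Formula A) :
    Sat M i χ ↔ Sat M j χ := by
  apply Sat_of_pathEq
  intro m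
  induction m with
  | zero => exact h
  | succ m ih =>
      show M.upd (M.path (i + m)) = M.upd (M.path (j + m))
      rw [ih]

lemma Sat_untl_bounded (i : ℕ) (φ ψ : Formula A) :
    Sat M i (.untl φ ψ) ↔
      ∃ n ≤ Fintype.card A, Sat M (i + n) ψ ∧ ∀ j < n, Sat M (i + j) φ := by
  constructor
  · rintro ⟨n, hn, hj⟩
    rcases le_or_gt n (Fintype.card A) with h | h
    · exact ⟨n, h, hn, hj⟩
    · refine ⟨Fintype.card A, le_rfl, ?_, fun j hj' => hj j (lt_trans hj' h)⟩
      have heq : M.path (i + n) = M.path (i + Fintype.card A) := by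
        have : i + n = i + Fintype.card A + (n - Fintype.card A) := by omega
        rw [this]; exact path_stab i _
      exact (Sat_of_pathEq' heq ψ).1 hn
  · rintro ⟨n, _, hn, hj⟩
    exact ⟨n, hn, hj⟩

lemma Sat_uStep (φ ψ : Formula A) (n : ℕ) :
    ∀ i, Sat M i (uStep φ ψ n) ↔ Sat M (i + n) ψ ∧ ∀ j < n, Sat M (i + j) φ := by
  induction n with
  | zero => intro i; simp [uStep]
  | succ n ih =>
      intro i
      simp only [uStep, Sat_and, Sat_next, ih (i + 1)]
      constructor
      · rintro ⟨h1, h2, h3⟩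
        refine ⟨by rw [show i + (n+1) = i + 1 + n by omega]; exact h2, ?_⟩
        intro j hj
        rcases Nat.eq_zero_or_pos j with rfl | hp
        · exact h1
        · have := h3 (j - 1) (by omega)
          rw [show i + 1 + (j - 1) = i + j by omega] at this
          exact this
      · rintro ⟨h1, h2⟩
        refine ⟨h2 0 (Nat.succ_pos _), by rw [show i + 1 + n = i + (n+1) by omega]; exact h1, ?_⟩
        intro j hj
        have := h2 (j + 1) (by omega)
        rw [show i + (j + 1) = i + 1 + j by omega] at this
        exact this

lemma Sat_expU (i : ℕ) (φ ψ : Formula A) :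
    Sat M i (expU φ ψ) ↔ Sat M i (.untl φ ψ) := by
  rw [Sat_untl_bounded]
  simp only [expU, Sat_bigOr, List.mem_map, List.mem_range]
  constructor
  · rintro ⟨χ, ⟨n, hn, rfl⟩, hs⟩
    rw [Sat_uStep] at hs
    exact ⟨n, by omega, hs⟩
  · rintro ⟨n, hn, hs⟩
    exact ⟨uStep φ ψ n, ⟨n, by omega, rfl⟩, (Sat_uStep φ ψ n i).2 hs⟩

lemma Sat_tu (χ : Formula A) : ∀ i, Sat M i (tu χ) ↔ Sat M i χ := by
  induction χ with
  | top => intro i; rfl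
  | nbr a c => intro i; rfl
  | beta a => intro i; rfl
  | neg φ ih => intro i; simp [tu, ih i]
  | and φ ψ ih1 ih2 => intro i; simp [tu, ih1 i, ih2 i]
  | next φ ih => intro i; simp [tu, ih (i + 1)]
  | untl φ ψ ih1 ih2 =>
      intro i
      show Sat M i (expU (tu φ) (tu ψ)) ↔ _
      rw [Sat_expU]
      simp only [Sat_untl]
      constructor
      · rintro ⟨n, h1, h2⟩
        exact ⟨n, (ih2 _).1 h1, fun j hj => (ih1 _).1 (h2 j hj)⟩
      · rintro ⟨n, h1, h2⟩
        exact ⟨n, (ih2 _).2 h1, fun j hj => (ih1 _).2 (h2 j hj)⟩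

lemma Sat_majorityF (hM : M.θ = θ) (i : ℕ) (a : A) :
    Sat M i (majorityF θ a) ↔
      θ < ((M.N a ∩ M.path i).card : ℝ) / ((M.N a).card : ℝ) := by
  have hpos : (0 : ℝ) < ((M.N a).card : ℝ) := by
    have := M.serial a
    exact_mod_cast Finset.card_pos.2 this
  simp only [majorityF, Sat_bigOr, List.mem_map]
  constructor
  · rintro ⟨χ, ⟨p, hp, rfl⟩, hs⟩
    rw [Finset.mem_toList, Finset.mem_filter] at hp
    obtain ⟨-, hsub, hratio⟩ := hp
    simp only [Sat_and, Sat_bigAnd, List.mem_map] at hs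
    obtain ⟨h1, h2, h3⟩ := hs
    -- p.2 = M.N a
    have hN : p.2 = M.N a := by
      apply Finset.ext
      intro c
      constructor
      · intro hc
        have := h1 _ ⟨c, Finset.mem_toList.2 hc, rfl⟩
        exact this
      · intro hc
        by_contra hcn
        have := h2 _ ⟨c, Finset.mem_toList.2 (by simp [hcn]), rfl⟩
        exact this hc
    -- p.1 ⊆ M.N a ∩ path i
    have hG : p.1 ⊆ M.N a ∩ M.path i := by
      intro c hc
      rw [Finset.mem_inter]
      exact ⟨hN ▸ hsub hc, h3 _ ⟨c, Finset.mem_toList.2 hc, rfl⟩⟩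
    have hcard : (p.1.card : ℝ) ≤ ((M.N a ∩ M.path i).card : ℝ) :=
      Nat.cast_le.2 (Finset.card_le_card hG)
    rw [hN] at hratio
    calc θ < (p.1.card : ℝ) / ((M.N a).card : ℝ) := hratio
      _ ≤ _ := by gcongr
  · intro hratio
    refine ⟨_, ⟨(M.N a ∩ M.path i, M.N a), ?_, rfl⟩, ?_⟩
    · rw [Finset.mem_toList, Finset.mem_filter]
      exact ⟨Finset.mem_univ _, Finset.inter_subset_left, hratio⟩
    · simp only [Sat_and, Sat_bigAnd, List.mem_map]
      refine ⟨?_, ?_, ?_⟩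
      · rintro χ ⟨c, hc, rfl⟩
        exact Finset.mem_toList.1 hc
      · rintro χ ⟨c, hc, rfl⟩
        rw [Finset.mem_toList, Finset.mem_sdiff] at hc
        exact hc.2
      · rintro χ ⟨c, hc, rfl⟩
        rw [Finset.mem_toList, Finset.mem_inter] at hc
        exact hc.2

lemma Sat_pushX (hM : M.θ = θ) {ψ : Formula A} (h : propositional ψ) :
    ∀ i, Sat M i (pushX θ ψ) ↔ Sat M (i + 1) ψ := by
  induction ψ with
  | top => intro i; rfl
  | nbr a c => intro i; rfl
  | beta a =>
      intro i
      show Sat M i ((Formula.beta a).orF (majorityF θ a)) ↔ a ∈ M.path (i + 1)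
      rw [Sat_orF, Sat_majorityF hM]
      show _ ↔ a ∈ M.upd (M.path i)
      rw [SNModel.upd, Finset.mem_union, Finset.mem_filter, hM]
      simp [Finset.mem_univ]
  | neg φ ih => intro i; simp [pushX, ih h i]
  | and φ ψ ih1 ih2 => intro i; simp [pushX, ih1 h.1 i, ih2 h.2 i]
  | next φ ih => exact (h : False).elim
  | untl φ ψ ih1 ih2 => exact (h : False).elim

lemma Sat_tr (hM : M.θ = θ) {χ : Formula A} (h : untilFree χ) :
    ∀ i, Sat M i (tr θ χ) ↔ Sat M i χ := by
  induction χ with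
  | top => intro i; rfl
  | nbr a c => intro i; rfl
  | beta a => intro i; rfl
  | neg φ ih => intro i; simp [tr, ih h i]
  | and φ ψ ih1 ih2 => intro i; simp [tr, ih1 h.1 i, ih2 h.2 i]
  | next φ ih =>
      intro i
      show Sat M i (pushX θ (tr θ φ)) ↔ _
      rw [Sat_pushX hM (propositional_tr (show untilFree φ from h))]
      exact ih h (i + 1)
  | untl φ ψ ih1 ih2 => exact (h : False).elim

end Aux4

section Aux5
set_option linter.unusedSectionVars false
variable {A : Type*} [Fintype A] [DecidableEq A] {θ : ℝ}

/-- Description list of a propositional state. -/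
noncomputable def descList (s : Finset (A × A) × Finset A) : List (Formula A) :=
  ((Finset.univ : Finset (A × A)).toList.map fun p =>
      if p ∈ s.1 then Formula.nbr p.1 p.2 else .neg (.nbr p.1 p.2)) ++
  ((Finset.univ : Finset A).toList.map fun a =>
      if a ∈ s.2 then Formula.beta a else .neg (.beta a))

noncomputable def desc (s : Finset (A × A) × Finset A) : Formula A := bigAnd (descList s)

lemma nbr_mem_descList {s : Finset (A × A) × Finset A} {a c : A} (h : (a, c) ∈ s.1) :
    Formula.nbr a c ∈ descList s := by
  apply List.mem_append_left
  refine List.mem_map.2 ⟨(a, c), Finset.mem_toList.2 (Finset.mem_univ _), ?_⟩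
  simp [h]

lemma negNbr_mem_descList {s : Finset (A × A) × Finset A} {a c : A} (h : (a, c) ∉ s.1) :
    Formula.neg (.nbr a c) ∈ descList s := by
  apply List.mem_append_left
  refine List.mem_map.2 ⟨(a, c), Finset.mem_toList.2 (Finset.mem_univ _), ?_⟩
  simp [h]

lemma evalProp_desc_nbr {v : Formula A → Prop} {s : Finset (A × A) × Finset A}
    (hd : evalProp v (desc s)) (a c : A) : v (.nbr a c) ↔ (a, c) ∈ s.1 := by
  rw [desc, evalProp_bigAnd] at hd
  constructor
  · intro hv
    by_contra hn
    exact (hd _ (negNbr_mem_descList hn)) hv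
  · intro hn
    exact hd _ (nbr_mem_descList hn)

lemma beta_mem_descList {s : Finset (A × A) × Finset A} {a : A} (h : a ∈ s.2) :
    Formula.beta a ∈ descList s := by
  apply List.mem_append_right
  refine List.mem_map.2 ⟨a, Finset.mem_toList.2 (Finset.mem_univ _), ?_⟩
  simp [h]

lemma negBeta_mem_descList {s : Finset (A × A) × Finset A} {a : A} (h : a ∉ s.2) :
    Formula.neg (.beta a) ∈ descList s := by
  apply List.mem_append_right
  refine List.mem_map.2 ⟨a, Finset.mem_toList.2 (Finset.mem_univ _), ?_⟩
  simp [h]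

lemma evalProp_desc_beta {v : Formula A → Prop} {s : Finset (A × A) × Finset A}
    (hd : evalProp v (desc s)) (a : A) : v (.beta a) ↔ a ∈ s.2 := by
  rw [desc, evalProp_bigAnd] at hd
  constructor
  · intro hv
    by_contra hn
    exact (hd _ (negBeta_mem_descList hn)) hv
  · intro hn
    exact hd _ (beta_mem_descList hn)

/-- The disjunction of all state descriptions is a tautology. -/
lemma taut_allDesc :
    Tautology (A := A) (bigOr (((Finset.univ :
      Finset (Finset (A × A) × Finset A))).toList.map desc)) := by
  intro v
  rw [evalProp_bigOr]
  refine ⟨desc (Finset.univ.filter (fun p : A × A => v (.nbr p.1 p.2)),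
      Finset.univ.filter (fun a : A => v (.beta a))),
    List.mem_map.2 ⟨_, Finset.mem_toList.2 (Finset.mem_univ _), rfl⟩, ?_⟩
  rw [desc, evalProp_bigAnd]
  intro ψ hψ
  rcases List.mem_append.1 hψ with h | h
  · obtain ⟨p, -, rfl⟩ := List.mem_map.1 h
    by_cases hv : v (.nbr p.1 p.2)
    · rw [if_pos (by simp [hv])]; exact hv
    · rw [if_neg (by simp [hv])]; exact hv
  · obtain ⟨a, -, rfl⟩ := List.mem_map.1 h
    by_cases hv : v (.beta a)
    · rw [if_pos (by simp [hv])]; exact hv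
    · rw [if_neg (by simp [hv])]; exact hv

/-- Or-elimination for `bigOr`. -/
lemma Proof.orElim {χ : Formula A} (l : List (Formula A))
    (h : ∀ ψ ∈ l, Proof θ (ψ.impF χ)) : Proof θ ((bigOr l).impF χ) := by
  induction l with
  | nil => exact Proof.taut (by intro v; simp [bigOr])
  | cons a l ih =>
      have h1 := h a (by simp)
      have h2 := ih fun x hx => h x (by simp [hx])
      exact Proof.mp (Proof.mp (Proof.taut
        (φ := (a.impF χ).impF (((bigOr l).impF χ).impF ((bigOr (a :: l)).impF χ)))
        (by intro v; simp [bigOr]; tauto)) h1) h2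

/-- evalProp vs Sat for propositional formulas under a matching valuation. -/
lemma evalProp_eq_Sat {v : Formula A → Prop} {M : SNModel A} {i : ℕ}
    (hn : ∀ a c, v (.nbr a c) ↔ c ∈ M.N a) (hb : ∀ a, v (.beta a) ↔ a ∈ M.path i) :
    ∀ {χ : Formula A}, propositional χ → (evalProp v χ ↔ Sat M i χ) := by
  intro χ
  induction χ with
  | top => intro _; simp
  | nbr a c => intro _; simpa using hn a c
  | beta a => intro _; simpa using hb a
  | neg φ ih => intro h; simp [ih h]
  | and φ ψ ih1 ih2 => intro h; simp [ih1 h.1, ih2 h.2]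
  | next φ ih => exact fun h => (h : False).elim
  | untl φ ψ ih1 ih2 => exact fun h => (h : False).elim

end Aux5

section Aux6
set_option linter.unusedSectionVars false
variable {A : Type*} [Fintype A] [DecidableEq A] {θ : ℝ}

lemma desc_imp_of_irrefl_fail {χ : Formula A} {s : Finset (A × A) × Finset A} {a : A}
    (h : (a, a) ∈ s.1) : Proof θ ((desc s).impF χ) := by
  refine Proof.mp (Proof.taut (φ := (Formula.neg (.nbr a a)).impF ((desc s).impF χ)) ?_)
    (Proof.netIrrefl a)
  intro v
  simp only [evalProp_impF, evalProp_neg, evalProp_nbr]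
  intro hne hd
  exact absurd ((evalProp_desc_nbr hd a a).2 h) hne

lemma desc_imp_of_symm_fail {χ : Formula A} {s : Finset (A × A) × Finset A} {a c : A}
    (h1 : (a, c) ∈ s.1) (h2 : (c, a) ∉ s.1) : Proof θ ((desc s).impF χ) := by
  refine Proof.mp (Proof.taut
    (φ := ((Formula.nbr a c).iffF (.nbr c a)).impF ((desc s).impF χ)) ?_) (Proof.netSymm a c)
  intro v
  simp only [evalProp_impF, evalProp_iffF, evalProp_nbr]
  intro hiff hd
  exact (h2 ((evalProp_desc_nbr hd c a).1 (hiff.1 ((evalProp_desc_nbr hd a c).2 h1)))).elim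

lemma desc_imp_of_serial_fail {χ : Formula A} {s : Finset (A × A) × Finset A} {a : A}
    (h : ∀ c, (a, c) ∉ s.1) : Proof θ ((desc s).impF χ) := by
  refine Proof.mp (Proof.taut
    (φ := (bigOr (((Finset.univ : Finset A)).toList.map (fun c => Formula.nbr a c))).impF
      ((desc s).impF χ)) ?_) (Proof.netSerial a)
  intro v
  simp only [evalProp_impF]
  intro hor hd
  rw [evalProp_bigOr] at hor
  obtain ⟨ψ, hψ, hv⟩ := hor
  obtain ⟨c, -, rfl⟩ := List.mem_map.1 hψ
  exact (h c ((evalProp_desc_nbr hd a c).1 hv)).elim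

lemma desc_imp_good (hθ0 : 0 ≤ θ) (hθ1 : θ ≤ 1) {χ : Formula A} (hχ : propositional χ)
    (hval : ∀ M : SNModel A, M.θ = θ → Sat M 0 χ) {s : Finset (A × A) × Finset A}
    (hirr : ∀ a, (a, a) ∉ s.1) (hsymm : ∀ a c, (a, c) ∈ s.1 → (c, a) ∈ s.1)
    (hser : ∀ a, ∃ c, (a, c) ∈ s.1) : Proof θ ((desc s).impF χ) := by
  set M : SNModel A :=
    { N := fun a => Finset.univ.filter (fun c => (a, c) ∈ s.1)
      θ := θ
      I := s.2
      irrefl := fun a => by simp [hirr a]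
      serial := fun a => by
        obtain ⟨c, hc⟩ := hser a
        exact ⟨c, by simp [hc]⟩
      symm := fun a c => by
        simp only [Finset.mem_filter, Finset.mem_univ, true_and]
        exact ⟨fun h => hsymm a c h, fun h => hsymm c a h⟩
      θ_nonneg := hθ0
      θ_le_one := hθ1 } with hMdef
  have hsat : Sat M 0 χ := hval M rfl
  refine Proof.taut ?_
  intro v
  simp only [evalProp_impF]
  intro hd
  have hn : ∀ a c, v (.nbr a c) ↔ c ∈ M.N a := by
    intro a c
    rw [evalProp_desc_nbr hd a c]
    simp [hMdef]
  have hb : ∀ a, v (.beta a) ↔ a ∈ M.path 0 := by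
    intro a
    rw [evalProp_desc_beta hd a]
    rfl
  exact (evalProp_eq_Sat hn hb hχ).2 hsat

lemma propComplete (hθ0 : 0 ≤ θ) (hθ1 : θ ≤ 1) {χ : Formula A} (hχ : propositional χ)
    (hval : ∀ M : SNModel A, M.θ = θ → Sat M 0 χ) : Proof θ χ := by
  have hall : Proof θ (bigOr (((Finset.univ :
      Finset (Finset (A × A) × Finset A))).toList.map desc)) := Proof.taut taut_allDesc
  refine Proof.mp (Proof.orElim _ ?_) hall
  intro ψ hψ
  obtain ⟨s, -, rfl⟩ := List.mem_map.1 hψ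
  by_cases hirr : ∀ a, (a, a) ∉ s.1
  · by_cases hsymm : ∀ a c, (a, c) ∈ s.1 → (c, a) ∈ s.1
    · by_cases hser : ∀ a, ∃ c, (a, c) ∈ s.1
      · exact desc_imp_good hθ0 hθ1 hχ hval hirr hsymm hser
      · push_neg at hser
        obtain ⟨a, ha⟩ := hser
        exact desc_imp_of_serial_fail ha
    · push_neg at hsymm
      obtain ⟨a, c, h1, h2⟩ := hsymm
      exact desc_imp_of_symm_fail h1 h2
  · push_neg at hirr
    obtain ⟨a, ha⟩ := hirr
    exact desc_imp_of_irrefl_fail ha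

end Aux6


/-- completeness of LTL-SN: over a fixed finite nonempty agent set
`A` and threshold `θ ∈ [0,1]`, if `M, i ⊨ φ` for every model `M` (with agent set
`A` and threshold `θ`) and every position `i`, then `⊢ φ`. -/
theorem completeness [Nonempty A] (θ : ℝ) (hθ0 : 0 ≤ θ) (hθ1 : θ ≤ 1)
    (φ : Formula A) (h : ∀ M : SNModel A, M.θ = θ → ∀ i : ℕ, Sat M i φ) :
    Proof θ φ := by
  have huf : untilFree (tu φ) := untilFree_tu φ
  have hiff : Proof θ (φ.iffF (tr θ (tu φ))) :=
    Proof.iffTrans (equivTu φ) (equivTr huf)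
  have hχprop : propositional (tr θ (tu φ)) := propositional_tr huf
  have hval : ∀ M : SNModel A, M.θ = θ → Sat M 0 (tr θ (tu φ)) := by
    intro M hM
    rw [Sat_tr hM huf 0]
    exact (Sat_tu φ 0).2 (h M hM 0)
  have hχ : Proof θ (tr θ (tu φ)) := propComplete hθ0 hθ1 hχprop hval
  exact Proof.mp (Proof.iff2 hiff) hχ
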